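/- If 𝒞 contains a non-monotonic connective, then FOCLS(𝒞) \ FOCDS(𝒞) ≠ ∅, i.e., there exists a sequent of first-order formulas over 𝒞 that is valid in all classical models but not valid in some constant-domain Kripke model. -/

import Mathlib

open Classical


/-- First-order formulas over a set `C` of propositional connectives
(each `c : C` has arity `ar c`).  Individual variables and, for each arity `n`,
the `n`-ary predicate symbols are indexed by `ℕ`. -/
inductive Formula (C : Type) (ar : C → ℕ) : Type
  | atom (n : ℕ) (p : ℕ) (v : Fin n → ℕ)
  | conn (c : C) (args : Fin (ar c) → Formula C ar)
  | all (x : ℕ) (φ : Formula C ar)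
  | ex  (x : ℕ) (φ : Formula C ar)

/-- A classical first-order model: a nonempty domain `D` (a set in an ambient
type `U`) together with an interpretation of every `n`-ary predicate symbol. -/
structure CModel where
  U : Type
  D : Set U
  D_ne : D.Nonempty
  I : (n : ℕ) → ℕ → (Fin n → U) → Bool

/-- Classical interpretation of a formula (value in `{0,1}`, coded by `Bool`),
where `tf c` is the truth function of the connective `c`. -/
noncomputable def cVal {C : Type} {ar : C → ℕ}
    (tf : (c : C) → (Fin (ar c) → Bool) → Bool) (M : CModel) :
    Formula C ar → (ℕ → M.U) → Bool
  | .atom n p v, ρ => M.I n p (fun i => ρ (v i))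
  | .conn c args, ρ => tf c (fun i => cVal tf M (args i) ρ)
  | .all x φ, ρ => decide (∀ a ∈ M.D, cVal tf M φ (Function.update ρ x a) = true)
  | .ex x φ, ρ => decide (∃ a ∈ M.D, cVal tf M φ (Function.update ρ x a) = true)

/-- A first-order Kripke model: a nonempty preordered set of worlds `W`,
monotone nonempty domains `D w` (sets in an ambient type `U`), and hereditary
interpretations of the predicate symbols. -/
structure KModel where
  W : Type
  W_ne : Nonempty W
  R : W → W → Prop
  refl : ∀ w, R w w
  trans : ∀ {w v u}, R w v → R v u → R w u
  U : Type
  D : W → Set U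
  D_ne : ∀ w, (D w).Nonempty
  D_mono : ∀ {w v}, R w v → D w ⊆ D v
  I : W → (n : ℕ) → ℕ → (Fin n → U) → Bool
  hered : ∀ {w v}, R w v → ∀ n p (a : Fin n → U),
      (∀ i, a i ∈ D w) → I w n p a = true → I v n p a = true

/-- Kripke interpretation of a formula at a world (value in `{0,1}`). -/
noncomputable def kVal {C : Type} {ar : C → ℕ}
    (tf : (c : C) → (Fin (ar c) → Bool) → Bool) (K : KModel) :
    Formula C ar → K.W → (ℕ → K.U) → Bool
  | .atom n p v, w, ρ => K.I w n p (fun i => ρ (v i))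
  | .conn c args, w, ρ =>
      decide (∀ u, K.R w u → tf c (fun i => kVal tf K (args i) u ρ) = true)
  | .all x φ, w, ρ =>
      decide (∀ u, K.R w u → ∀ a ∈ K.D u,
        kVal tf K φ u (Function.update ρ x a) = true)
  | .ex x φ, w, ρ =>
      decide (∃ a ∈ K.D w, kVal tf K φ w (Function.update ρ x a) = true)

/-- A Kripke model has constant domains. -/
def ConstDom (K : KModel) : Prop := ∀ w v : K.W, K.D w = K.D v

/-- The sequent `Γ ⟹ Δ` is valid in all classical models (`Γ ⟹ Δ ∈ FOCLS(𝒞)`):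
at every classical model and assignment into the domain, its interpretation is 1,
i.e. it is never the case that everything in `Γ` gets 1 and everything in `Δ` gets 0. -/
def SeqCValid {C : Type} {ar : C → ℕ} (tf : (c : C) → (Fin (ar c) → Bool) → Bool)
    (Γ Δ : Set (Formula C ar)) : Prop :=
  ∀ M : CModel, ∀ ρ : ℕ → M.U, (∀ x, ρ x ∈ M.D) →
    ¬ ((∀ φ ∈ Γ, cVal tf M φ ρ = true) ∧ (∀ φ ∈ Δ, cVal tf M φ ρ = false))

/-- The sequent `Γ ⟹ Δ` is valid in all constant-domain Kripke models
(`Γ ⟹ Δ ∈ FOCDS(𝒞)`). -/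
def SeqCDValid {C : Type} {ar : C → ℕ} (tf : (c : C) → (Fin (ar c) → Bool) → Bool)
    (Γ Δ : Set (Formula C ar)) : Prop :=
  ∀ K : KModel, ConstDom K → ∀ w : K.W, ∀ ρ : ℕ → K.U, (∀ x, ρ x ∈ K.D w) →
    ¬ ((∀ φ ∈ Γ, kVal tf K φ w ρ = true) ∧ (∀ φ ∈ Δ, kVal tf K φ w ρ = false))

/-- A truth function is monotonic. -/
def MonoTF {n : ℕ} (f : (Fin n → Bool) → Bool) : Prop :=
  ∀ a b : Fin n → Bool, (∀ i, a i ≤ b i) → f a ≤ f b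

/-- Propositional formulas over `C`: built from propositional symbols
(indexed by `ℕ`) by the connectives in `C`. -/
inductive PFormula (C : Type) (ar : C → ℕ) : Type
  | atom (p : ℕ)
  | conn (c : C) (args : Fin (ar c) → PFormula C ar)

/-- Value of a propositional formula under a classical valuation `v`. -/
def pcVal {C : Type} {ar : C → ℕ} (tf : (c : C) → (Fin (ar c) → Bool) → Bool)
    (v : ℕ → Bool) : PFormula C ar → Bool
  | .atom p => v p
  | .conn c args => tf c (fun i => pcVal tf v (args i))

/-- A propositional Kripke model. -/
structure PKModel where
  W : Type
  W_ne : Nonempty W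
  R : W → W → Prop
  refl : ∀ w, R w w
  trans : ∀ {w v u}, R w v → R v u → R w u
  I : W → ℕ → Bool
  hered : ∀ {w v}, R w v → ∀ p, I w p = true → I v p = true

/-- Kripke interpretation of a propositional formula at a world. -/
noncomputable def pkVal {C : Type} {ar : C → ℕ}
    (tf : (c : C) → (Fin (ar c) → Bool) → Bool) (K : PKModel) :
    PFormula C ar → K.W → Bool
  | .atom p, w => K.I w p
  | .conn c args, w =>
      decide (∀ u, K.R w u → tf c (fun i => pkVal tf K (args i) u) = true)

/-- The propositional sequent `Γ ⟹ Δ` is valid under all classical valuations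
(`Γ ⟹ Δ ∈ CLS(𝒞)`). -/
def PSeqCValid {C : Type} {ar : C → ℕ} (tf : (c : C) → (Fin (ar c) → Bool) → Bool)
    (Γ Δ : Set (PFormula C ar)) : Prop :=
  ∀ v : ℕ → Bool,
    ¬ ((∀ φ ∈ Γ, pcVal tf v φ = true) ∧ (∀ φ ∈ Δ, pcVal tf v φ = false))

/-- The propositional sequent `Γ ⟹ Δ` is valid at all worlds of all
propositional Kripke models (`Γ ⟹ Δ ∈ ILS(𝒞)`). -/
def PSeqKValid {C : Type} {ar : C → ℕ} (tf : (c : C) → (Fin (ar c) → Bool) → Bool)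
    (Γ Δ : Set (PFormula C ar)) : Prop :=
  ∀ K : PKModel, ∀ w : K.W,
    ¬ ((∀ φ ∈ Γ, pkVal tf K φ w = true) ∧ (∀ φ ∈ Δ, pkVal tf K φ w = false))

/-- The formula `α` is classically valid (`α ∈ FOCL(𝒞)`). -/
def FmlCValid {C : Type} {ar : C → ℕ} (tf : (c : C) → (Fin (ar c) → Bool) → Bool)
    (α : Formula C ar) : Prop :=
  ∀ M : CModel, ∀ ρ : ℕ → M.U, (∀ x, ρ x ∈ M.D) → cVal tf M α ρ = true

/-- The formula `α` is CD-valid (`α ∈ FOCD(𝒞)`): valid in all constant-domain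
Kripke models. -/
def FmlCDValid {C : Type} {ar : C → ℕ} (tf : (c : C) → (Fin (ar c) → Bool) → Bool)
    (α : Formula C ar) : Prop :=
  ∀ K : KModel, ConstDom K → ∀ w : K.W, ∀ ρ : ℕ → K.U, (∀ x, ρ x ∈ K.D w) →
    kVal tf K α w ρ = true

/-- `α` is a propositional formula built only from propositional symbols
(0-ary predicate symbols) and the connective `c`. -/
inductive IsPropC {C : Type} {ar : C → ℕ} (c : C) : Formula C ar → Prop
  | atom (p : ℕ) (v : Fin 0 → ℕ) : IsPropC c (.atom 0 p v)
  | conn (args : Fin (ar c) → Formula C ar) :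
      (∀ i, IsPropC c (args i)) → IsPropC c (.conn c args)

/-- A propositional formula viewed as a first-order formula (propositional
symbols become 0-ary predicate symbols). -/
def PFormula.toFO {C : Type} {ar : C → ℕ} : PFormula C ar → Formula C ar
  | .atom p => .atom 0 p (fun i => i.elim0)
  | .conn c args => .conn c (fun i => (args i).toFO)


/-!
A non-monotonic truth function `f` has arguments `a ≤ b` with `f a = 1` and `f b = 0`.
Reading `a` as a valuation of propositional variables `p₀, …, pₙ₋₁`, the sequent
`{pᵢ | aᵢ = 1} ⟹ c(p₀, …, pₙ₋₁), {pᵢ | aᵢ = 0}` pins the variables classically to `a`,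
where `c(p₀, …, pₙ₋₁)` takes the value `f a = 1`, so it is classically valid.
In the two-world Kripke model whose root sees `a` and whose top world sees `b`,
the root refutes it: `c(p₀, …, pₙ₋₁)` fails at the root because `f b = 0` at the top world.
-/

namespace Formula

variable {C : Type} {ar : C → ℕ}

def propVar (p : ℕ) : Formula C ar := .atom 0 p Fin.elim0

def connVars (c : C) : Formula C ar := .conn c fun i => propVar i

end Formula

open Formula

section

variable {C : Type} {ar : C → ℕ} {n : ℕ}

def trueVars (a : Fin n → Bool) : Set (Formula C ar) :=
  (fun i : Fin n => propVar i) '' {i | a i = true}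

def falseVars (a : Fin n → Bool) : Set (Formula C ar) :=
  (fun i : Fin n => propVar i) '' {i | a i = false}

theorem exists_of_not_monoTF {f : (Fin n → Bool) → Bool} (hf : ¬ MonoTF f) :
    ∃ a b : Fin n → Bool, a ≤ b ∧ f a = true ∧ f b = false := by
  simp only [MonoTF, not_forall, not_le] at hf
  obtain ⟨a, b, hab, hlt⟩ := hf
  exact ⟨a, b, hab, (Bool.lt_iff.mp hlt).symm⟩

theorem seqCValid_of_tf_eq_true (tf : (c : C) → (Fin (ar c) → Bool) → Bool) {c : C}
    {a : Fin (ar c) → Bool} (ha : tf c a = true) :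
    SeqCValid tf (trueVars a) (insert (connVars c) (falseVars a)) := by
  rintro M ρ - ⟨hΓ, hΔ⟩
  have hvars : (fun i : Fin (ar c) => cVal tf M (propVar i) ρ) = a := by
    funext i
    cases hai : a i
    · exact hΔ _ (Set.mem_insert_of_mem _ ⟨i, hai, rfl⟩)
    · exact hΓ _ ⟨i, hai, rfl⟩
  have hconn := hΔ _ (Set.mem_insert _ _)
  simp only [connVars, cVal, hvars, ha] at hconn
  exact absurd hconn Bool.true_eq_false.mp

def twoWorldModel (a b : Fin n → Bool) (hab : a ≤ b) : KModel where
  W := Bool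
  W_ne := ⟨false⟩
  R := (· ≤ ·)
  refl := le_refl
  trans := le_trans
  U := Unit
  D := fun _ => Set.univ
  D_ne := fun _ => Set.univ_nonempty
  D_mono := fun _ => subset_rfl
  I := fun w _ p _ => if h : p < n then (if w then b ⟨p, h⟩ else a ⟨p, h⟩) else false
  hered := by
    rintro (_ | _) (_ | _) hwv m p - - hp
    · exact hp
    · by_cases h : p < n
      · simp only [h, dif_pos, Bool.false_eq_true, if_false, if_true] at hp ⊢
        exact le_antisymm le_top (hp ▸ hab ⟨p, h⟩)
      · simp [h] at hp
    · exact absurd hwv (by decide)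
    · exact hp

theorem constDom_twoWorldModel (a b : Fin n → Bool) (hab : a ≤ b) :
    ConstDom (twoWorldModel a b hab) := fun _ _ => rfl

theorem kVal_propVar_twoWorldModel (tf : (c : C) → (Fin (ar c) → Bool) → Bool)
    {a b : Fin n → Bool} (hab : a ≤ b) (w : Bool) (i : Fin n) (ρ : ℕ → Unit) :
    kVal tf (twoWorldModel a b hab) (propVar i : Formula C ar) w ρ = if w then b i else a i := by
  simp [kVal, propVar, twoWorldModel, i.isLt]

theorem kVal_connVars_twoWorldModel_false (tf : (c : C) → (Fin (ar c) → Bool) → Bool) {c : C}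
    {a b : Fin (ar c) → Bool} (hab : a ≤ b) (ρ : ℕ → Unit) :
    kVal tf (twoWorldModel a b hab) (connVars c) false ρ = (tf c a && tf c b) := by
  have hroot : (fun i : Fin (ar c) =>
      kVal tf (twoWorldModel a b hab) (propVar i) false ρ) = a := by
    funext i
    simp [kVal_propVar_twoWorldModel]
  have htop : (fun i : Fin (ar c) =>
      kVal tf (twoWorldModel a b hab) (propVar i) true ρ) = b := by
    funext i
    simp [kVal_propVar_twoWorldModel]
  simp only [connVars, kVal]
  apply Bool.eq_iff_iff.mpr
  rw [decide_eq_true_iff, Bool.and_eq_true]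
  constructor
  · intro h
    exact ⟨hroot ▸ h false le_rfl, htop ▸ h true le_top⟩
  · rintro ⟨ha, hb⟩ (_ | _) -
    · rwa [hroot]
    · rwa [htop]

theorem not_seqCDValid_of_tf_eq_false (tf : (c : C) → (Fin (ar c) → Bool) → Bool) {c : C}
    {a b : Fin (ar c) → Bool} (hab : a ≤ b) (hb : tf c b = false) :
    ¬ SeqCDValid tf (trueVars a) (insert (connVars c) (falseVars a)) := by
  intro hvalid
  refine hvalid (twoWorldModel a b hab) (constDom_twoWorldModel a b hab) false (fun _ => ())
    (fun _ => Set.mem_univ _) ⟨?_, ?_⟩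
  · rintro _ ⟨i, hai, rfl⟩
    simpa [kVal_propVar_twoWorldModel] using hai
  · rintro _ (rfl | ⟨i, hai, rfl⟩)
    · simp [kVal_connVars_twoWorldModel_false, hb]
    · simpa [kVal_propVar_twoWorldModel] using hai

end

/-- if `𝒞` contains a non-monotonic connective then
`FOCLS(𝒞) \ FOCDS(𝒞) ≠ ∅`. -/
theorem stmt_2 (C : Type) (ar : C → ℕ) (tf : (c : C) → (Fin (ar c) → Bool) → Bool)
    (hnm : ∃ c : C, ¬ MonoTF (tf c)) :
    ∃ Γ Δ : Set (Formula C ar), SeqCValid tf Γ Δ ∧ ¬ SeqCDValid tf Γ Δ := by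
  obtain ⟨c, hc⟩ := hnm
  obtain ⟨a, b, hab, ha, hb⟩ := exists_of_not_monoTF hc
  exact ⟨_, _, seqCValid_of_tf_eq_true tf ha, not_seqCDValid_of_tf_eq_false tf hab hb⟩
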